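/- Let S be a finite set with |S| = κ ≥ 2 and α > 1. There exists a constant C_κ > 0 depending only on α and κ such that for every integer ℓ > 0 and every N > ℓ, N^α Σ_{η ∈ E_N : max_x η_x ≤ N - ℓ} 1/a(η) ≤ C_κ / ℓ^{α-1}. -/

import Mathlib

noncomputable def aZR (α : ℝ) (n : ℕ) : ℝ := if n = 0 then 1 else (n : ℝ) ^ α

def confs (S : Type*) [Fintype S] [DecidableEq S] (N : ℕ) : Finset (S → ℕ) :=
  (Fintype.piFinset fun _ => Finset.range (N + 1)).filter (fun η => ∑ x, η x = N)

/-! A configuration with every coordinate at most `N - ℓ` has, by pigeonhole, a coordinate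
`x` with `η x ≥ N / κ`, and, since the remaining coordinates carry mass at least `ℓ`, a second
coordinate `y ≠ x` with `η y ≥ ℓ / κ`. The factor `1 / a(η x) ≤ (κ / N)^α` absorbs `N^α`.
Once `x` is dropped (it is determined by the other coordinates), the sum factorises: the
`y`-factor is a tail of the `p`-series, `∑_{m ≥ ℓ/κ} m^{-α} = O((ℓ/κ)^{1-α})`, and every other
factor is at most `∑ₙ 1 / a(n) < ∞`. -/

open Finset

section Weights

variable {α : ℝ}

@[simp]
lemma aZR_zero (α : ℝ) : aZR α 0 = 1 := if_pos rfl

lemma aZR_pos (α : ℝ) (n : ℕ) : 0 < aZR α n := by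
  unfold aZR
  split_ifs
  exacts [one_pos, by positivity]

lemma one_div_aZR_of_ne_zero (α : ℝ) {n : ℕ} (hn : n ≠ 0) :
    1 / aZR α n = (n : ℝ) ^ (-α) := by
  rw [aZR, if_neg hn, Real.rpow_neg n.cast_nonneg, one_div]

lemma summable_one_div_aZR (hα : 1 < α) : Summable fun n : ℕ => 1 / aZR α n := by
  rw [← summable_nat_add_iff 1]
  refine ((summable_nat_add_iff 1).2 (Real.summable_one_div_nat_rpow.2 hα)).congr fun n => ?_
  rw [one_div_aZR_of_ne_zero α n.succ_ne_zero, Real.rpow_neg (by positivity), one_div]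

lemma one_le_tsum_one_div_aZR (hα : 1 < α) : 1 ≤ ∑' n : ℕ, 1 / aZR α n := by
  simpa using (summable_one_div_aZR hα).le_tsum 0 fun n _ => (one_div_pos.2 (aZR_pos α n)).le

lemma sum_Ioc_rpow_neg_le (hα : 1 < α) {M : ℕ} (hM : 0 < M) (B : ℕ) :
    ∑ m ∈ Ioc M B, (m : ℝ) ^ (-α) ≤ (M : ℝ) ^ (1 - α) / (α - 1) := by
  have hM' : (0 : ℝ) < M := by exact_mod_cast hM
  have hanti : AntitoneOn (fun t : ℝ => t ^ (-α)) (Set.Icc M B) := fun s hs t _ hst =>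
    Real.rpow_le_rpow_of_nonpos (hM'.trans_le hs.1) hst (by linarith)
  have hint := hanti.sum_Ico_le_integral (integrableOn_Ioi_rpow_of_lt (by linarith) hM')
    fun t ht => Real.rpow_nonneg (hM'.trans ht).le _
  rw [integral_Ioi_rpow_of_lt (by linarith) hM'] at hint
  rw [← Ico_add_one_add_one_eq_Ioc, ← map_add_right_Ico, sum_map]
  convert hint using 1
  · rfl
  · rw [show -α + 1 = 1 - α by ring, neg_div, ← div_neg, neg_sub]

lemma sum_one_div_aZR_le_of_forall_le (hα : 1 < α) {r : ℝ} (hr : 0 < r) {s : Finset ℕ}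
    (hs : ∀ m ∈ s, r ≤ m) : ∑ m ∈ s, 1 / aZR α m ≤ α / (α - 1) * r ^ (1 - α) := by
  set M := ⌈r⌉₊
  have hM : 0 < M := Nat.ceil_pos.2 hr
  have hM' : (1 : ℝ) ≤ M := by exact_mod_cast hM
  have hsub : s ⊆ Icc M (s.sup id) := fun m hm =>
    mem_Icc.2 ⟨Nat.ceil_le.2 (hs m hm), le_sup (f := id) hm⟩
  calc ∑ m ∈ s, 1 / aZR α m = ∑ m ∈ s, (m : ℝ) ^ (-α) :=
        sum_congr rfl fun m hm => one_div_aZR_of_ne_zero α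
          (Nat.cast_ne_zero.1 (hr.trans_le (hs m hm)).ne')
    _ ≤ ∑ m ∈ Icc M (s.sup id), (m : ℝ) ^ (-α) :=
        sum_le_sum_of_subset_of_nonneg hsub fun m _ _ => Real.rpow_nonneg m.cast_nonneg _
    _ ≤ (M : ℝ) ^ (-α) + (M : ℝ) ^ (1 - α) / (α - 1) := by
        rcases le_or_gt M (s.sup id) with hMB | hBM
        · rw [Icc_eq_cons_Ioc hMB, sum_cons]
          exact add_le_add_right (sum_Ioc_rpow_neg_le hα hM _) _
        · rw [Icc_eq_empty_of_lt hBM, sum_empty]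
          positivity
    _ ≤ (M : ℝ) ^ (1 - α) + (M : ℝ) ^ (1 - α) / (α - 1) := by
        gcongr
        linarith
    _ = α / (α - 1) * (M : ℝ) ^ (1 - α) := by
        field_simp [show α - 1 ≠ 0 by linarith]
        ring
    _ ≤ α / (α - 1) * r ^ (1 - α) := by
        refine mul_le_mul_of_nonneg_left ?_ (div_pos (by linarith) (by linarith)).le
        exact Real.rpow_le_rpow_of_nonpos hr (Nat.le_ceil r) (by linarith)

end Weights

lemma Finset.sum_le_sum_sum_filter_of_forall_exists {ι β M : Type*} [AddCommMonoid M]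
    [PartialOrder M] [IsOrderedAddMonoid M] {s : Finset ι} {t : Finset β} (P : β → ι → Prop)
    [∀ b, DecidablePred (P b)] {f : ι → M} (hf : ∀ i ∈ s, 0 ≤ f i)
    (hcover : ∀ i ∈ s, ∃ b ∈ t, P b i) :
    ∑ i ∈ s, f i ≤ ∑ b ∈ t, ∑ i ∈ s.filter (P b), f i := by
  calc ∑ i ∈ s, f i ≤ ∑ i ∈ s, ∑ b ∈ t, if P b i then f i else 0 := by
        refine sum_le_sum fun i hi => ?_
        obtain ⟨b, hb, hP⟩ := hcover i hi
        simpa [hP] using single_le_sum (f := fun b => if P b i then f i else 0)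
          (fun b _ => by split_ifs <;> simp [hf i hi]) hb
    _ = ∑ b ∈ t, ∑ i ∈ s.filter (P b), f i := by
        rw [sum_comm]
        simp_rw [sum_filter]

lemma Finset.sum_prod_le_prod_sum_image {ι κ R : Type*} [Fintype ι] [DecidableEq ι]
    [DecidableEq κ] [CommSemiring R] [PartialOrder R] [IsOrderedRing R] (F : Finset (ι → κ))
    {f : ι → κ → R} (hf : ∀ i k, 0 ≤ f i k) :
    ∑ g ∈ F, ∏ i, f i (g i) ≤ ∏ i, ∑ k ∈ F.image (· i), f i k := by
  rw [prod_univ_sum]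
  refine sum_le_sum_of_subset_of_nonneg (fun g hg => ?_) fun g _ _ => prod_nonneg fun i _ => hf i _
  exact Fintype.mem_piFinset.2 fun i => mem_image_of_mem _ hg

lemma Finset.exists_le_card_mul_of_le_sum {ι : Type*} {s : Finset ι} {f : ι → ℕ} {a : ℕ}
    (ha : 0 < a) (h : a ≤ ∑ i ∈ s, f i) : ∃ i ∈ s, a ≤ #s * f i := by
  have hs : s.Nonempty := nonempty_of_sum_ne_zero (f := f) (by omega)
  refine exists_le_of_sum_le hs ?_
  rw [sum_const, smul_eq_mul, ← mul_sum]
  exact Nat.mul_le_mul_left _ h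

section Configurations

variable {S : Type*} [Fintype S] [DecidableEq S] {N : ℕ}

lemma mem_confs {η : S → ℕ} : η ∈ confs S N ↔ ∑ x, η x = N := by
  refine mem_filter.trans ⟨And.right, fun h => ⟨Fintype.mem_piFinset.2 fun x => ?_, h⟩⟩
  exact mem_range.2 <| Nat.lt_succ_of_le <|
    h ▸ single_le_sum (fun _ _ => Nat.zero_le _) (mem_univ x)

lemma exists_ne_of_mem_confs {η : S → ℕ} {ℓ : ℕ} (hη : η ∈ confs S N) (hℓ : 0 < ℓ)
    (hℓN : ℓ ≤ N) (hmax : ∀ x, η x ≤ N - ℓ) :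
    ∃ x y, x ≠ y ∧ N ≤ Fintype.card S * η x ∧ ℓ ≤ Fintype.card S * η y := by
  rw [mem_confs] at hη
  obtain ⟨x, -, hx⟩ := exists_le_card_mul_of_le_sum (s := univ) (by omega) hη.ge
  have hrest : ℓ ≤ ∑ z ∈ univ.erase x, η z := by
    have := add_sum_erase univ η (mem_univ x)
    have := hmax x
    omega
  obtain ⟨y, hy, hyℓ⟩ := exists_le_card_mul_of_le_sum hℓ hrest
  refine ⟨x, y, (ne_of_mem_erase hy).symm, hx, hyℓ.trans ?_⟩
  exact Nat.mul_le_mul_right _ (card_le_univ _)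

lemma injOn_update_zero_confs (x : S) :
    Set.InjOn (fun η : S → ℕ => Function.update η x 0) (confs S N) := by
  intro η hη η' hη' h
  have hoff : ∀ z ∈ univ.erase x, η z = η' z := fun z hz => by
    simpa [Function.update_of_ne (ne_of_mem_erase hz)] using congrFun h z
  funext z
  rcases eq_or_ne z x with rfl | hz
  · rw [Finset.mem_coe, mem_confs, ← add_sum_erase _ _ (mem_univ z)] at hη hη'
    have hsum : ∑ w ∈ univ.erase z, η w = ∑ w ∈ univ.erase z, η' w := sum_congr rfl hoff
    omega
  · exact hoff z (mem_erase.2 ⟨hz, mem_univ z⟩)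

end Configurations

section ConfigurationWeights

variable {S : Type*} [Fintype S] [DecidableEq S] {α : ℝ}

lemma one_div_aZR_le_rpow_neg (hα : 0 ≤ α) {r : ℝ} (hr : 0 < r) {n : ℕ} (h : r ≤ n) :
    1 / aZR α n ≤ r ^ (-α) := by
  rw [one_div_aZR_of_ne_zero α (Nat.cast_ne_zero.1 (hr.trans_le h).ne')]
  exact Real.rpow_le_rpow_of_nonpos hr h (neg_nonpos.2 hα)

lemma prod_one_div_aZR_eq_mul_update_zero (α : ℝ) (η : S → ℕ) (x : S) :
    ∏ z, 1 / aZR α (η z) = 1 / aZR α (η x) * ∏ z, 1 / aZR α (Function.update η x 0 z) := by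
  rw [← mul_prod_erase univ _ (mem_univ x),
    ← mul_prod_erase univ (fun z => 1 / aZR α _) (mem_univ x)]
  simp only [Function.update_self, aZR_zero, div_one, one_mul]
  congr 1
  exact prod_congr rfl fun z hz => by rw [Function.update_of_ne (ne_of_mem_erase hz)]

lemma sum_prod_one_div_aZR_le (hα : 1 < α) {r : ℝ} (hr : 0 < r) (F : Finset (S → ℕ)) (y : S)
    (hF : ∀ g ∈ F, r ≤ g y) :
    ∑ g ∈ F, ∏ z, 1 / aZR α (g z) ≤
      α / (α - 1) * r ^ (1 - α) * (∑' n : ℕ, 1 / aZR α n) ^ (Fintype.card S - 1) := by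
  have hnonneg : ∀ k, 0 ≤ 1 / aZR α k := fun k => (one_div_pos.2 (aZR_pos α k)).le
  have hZ : ∀ z, ∑ k ∈ F.image (· z), 1 / aZR α k ≤ ∑' n : ℕ, 1 / aZR α n := fun z =>
    (summable_one_div_aZR hα).sum_le_tsum _ fun k _ => hnonneg k
  refine (sum_prod_le_prod_sum_image F fun _ => hnonneg).trans ?_
  rw [← mul_prod_erase univ _ (mem_univ y)]
  refine mul_le_mul ?_ ?_ (prod_nonneg fun z _ => sum_nonneg fun k _ => hnonneg k) ?_
  · refine sum_one_div_aZR_le_of_forall_le hα hr fun k hk => ?_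
    obtain ⟨g, hg, rfl⟩ := mem_image.1 hk
    exact hF g hg
  · calc ∏ z ∈ univ.erase y, ∑ k ∈ F.image (· z), 1 / aZR α k
        ≤ ∏ _z ∈ univ.erase y, ∑' n : ℕ, 1 / aZR α n :=
          prod_le_prod (fun z _ => sum_nonneg fun k _ => hnonneg k) fun z _ => hZ z
      _ = _ := by rw [prod_const, card_erase_of_mem (mem_univ y), card_univ]
  · have : 0 < α - 1 := by linarith
    positivity

/-- Forgetting the large coordinate `x` costs the factor `a(η x) ≥ a^α`, and is injective on
configurations of fixed total mass. -/
lemma sum_prod_one_div_aZR_le_of_subset_confs (hα : 1 < α) {N : ℕ} {a b : ℝ} (ha : 0 < a)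
    (hb : 0 < b) {x y : S} (hxy : x ≠ y) {F : Finset (S → ℕ)} (hF : F ⊆ confs S N)
    (hx : ∀ η ∈ F, a ≤ η x) (hy : ∀ η ∈ F, b ≤ η y) :
    ∑ η ∈ F, ∏ z, 1 / aZR α (η z) ≤
      a ^ (-α) *
        (α / (α - 1) * b ^ (1 - α) * (∑' n : ℕ, 1 / aZR α n) ^ (Fintype.card S - 1)) := by
  set forget := fun η : S → ℕ => Function.update η x 0
  calc ∑ η ∈ F, ∏ z, 1 / aZR α (η z)
      ≤ ∑ η ∈ F, a ^ (-α) * ∏ z, 1 / aZR α (forget η z) := sum_le_sum fun η hη => by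
        rw [prod_one_div_aZR_eq_mul_update_zero α η x]
        gcongr
        · exact prod_nonneg fun z _ => (one_div_pos.2 (aZR_pos α _)).le
        · exact one_div_aZR_le_rpow_neg (by linarith) ha (hx η hη)
    _ = a ^ (-α) * ∑ g ∈ F.image forget, ∏ z, 1 / aZR α (g z) := by
        rw [← mul_sum, sum_image ((injOn_update_zero_confs x).mono (by exact_mod_cast hF))]
    _ ≤ _ := by
        refine mul_le_mul_of_nonneg_left (sum_prod_one_div_aZR_le hα hb _ y fun g hg => ?_)
          (by positivity)
        obtain ⟨η, hη, rfl⟩ := mem_image.1 hg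
        simpa [forget, Function.update_of_ne hxy.symm] using hy η hη

lemma sum_prod_one_div_aZR_truncated_le (hκ : 0 < Fintype.card S) (hα : 1 < α) {ℓ N : ℕ}
    (hℓ : 0 < ℓ) (hℓN : ℓ ≤ N) :
    ∑ η ∈ (confs S N).filter (fun η => ∀ x, η x ≤ N - ℓ), ∏ x, 1 / aZR α (η x) ≤
      Fintype.card S ^ 2 * (((N : ℝ) / Fintype.card S) ^ (-α) *
        (α / (α - 1) * ((ℓ : ℝ) / Fintype.card S) ^ (1 - α) *
          (∑' n : ℕ, 1 / aZR α n) ^ (Fintype.card S - 1))) := by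
  set κ := Fintype.card S
  set A := (confs S N).filter fun η => ∀ x, η x ≤ N - ℓ
  set bound := ((N : ℝ) / κ) ^ (-α) *
    (α / (α - 1) * ((ℓ : ℝ) / κ) ^ (1 - α) * (∑' n : ℕ, 1 / aZR α n) ^ (κ - 1))
  have hκ0 : (0 : ℝ) < κ := by exact_mod_cast hκ
  have hcast : ∀ {m n : ℕ}, m ≤ κ * n → (m : ℝ) / κ ≤ n := fun h => by
    rw [div_le_iff₀ hκ0]
    exact_mod_cast h.trans_eq (mul_comm _ _)
  have hcover : ∀ η ∈ A, ∃ p ∈ univ.offDiag, N ≤ κ * η p.1 ∧ ℓ ≤ κ * η p.2 := by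
    intro η hη
    obtain ⟨x, y, hxy, hx, hy⟩ :=
      exists_ne_of_mem_confs (mem_filter.1 hη).1 hℓ hℓN (mem_filter.1 hη).2
    exact ⟨(x, y), mem_offDiag.2 ⟨mem_univ x, mem_univ y, hxy⟩, hx, hy⟩
  have hpair : ∀ p ∈ univ.offDiag,
      ∑ η ∈ A.filter fun η => N ≤ κ * η p.1 ∧ ℓ ≤ κ * η p.2, ∏ x, 1 / aZR α (η x) ≤ bound :=
    fun p hp => sum_prod_one_div_aZR_le_of_subset_confs hα
      (div_pos (by exact_mod_cast hℓ.trans_le hℓN) hκ0) (div_pos (by exact_mod_cast hℓ) hκ0)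
      (mem_offDiag.1 hp).2.2 ((filter_subset _ _).trans (filter_subset _ _))
      (fun η hη => hcast (mem_filter.1 hη).2.1) (fun η hη => hcast (mem_filter.1 hη).2.2)
  have hcard : (#(univ : Finset S).offDiag : ℝ) ≤ κ ^ 2 := by
    rw [offDiag_card, card_univ]
    exact_mod_cast (Nat.sub_le _ _).trans_eq (sq κ).symm
  have hbound : 0 ≤ bound := by
    have := one_le_tsum_one_div_aZR hα
    have : 0 < α - 1 := by linarith
    positivity
  calc ∑ η ∈ A, ∏ x, 1 / aZR α (η x)
      ≤ ∑ p ∈ univ.offDiag, ∑ η ∈ A.filter fun η => N ≤ κ * η p.1 ∧ ℓ ≤ κ * η p.2,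
          ∏ x, 1 / aZR α (η x) :=
        sum_le_sum_sum_filter_of_forall_exists _
          (fun η _ => prod_nonneg fun x _ => (one_div_pos.2 (aZR_pos α _)).le) hcover
    _ ≤ ∑ _p ∈ univ.offDiag, bound := sum_le_sum hpair
    _ ≤ κ ^ 2 * bound := by
        rw [sum_const, nsmul_eq_mul]
        exact mul_le_mul_of_nonneg_right hcard hbound

end ConfigurationWeights

theorem truncated_partition_function_bound (S : Type*) [Fintype S] [DecidableEq S]
    (hκ : 2 ≤ Fintype.card S) (α : ℝ) (hα : 1 < α) :
    ∃ C : ℝ, 0 < C ∧ ∀ ℓ N : ℕ, 0 < ℓ → ℓ < N →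
      (N : ℝ) ^ α *
        ∑ η ∈ (confs S N).filter (fun η => ∀ x, η x ≤ N - ℓ),
          ∏ x, 1 / aZR α (η x) ≤ C / (ℓ : ℝ) ^ (α - 1) := by
  set κ := Fintype.card S
  set Z := ∑' n : ℕ, 1 / aZR α n
  have hκ0 : (0 : ℝ) < κ := by exact_mod_cast (by omega : 0 < κ)
  have hZ : 0 < Z := zero_lt_one.trans_le (one_le_tsum_one_div_aZR hα)
  have hα1 : 0 < α - 1 := by linarith
  refine ⟨κ ^ 2 * κ ^ α * κ ^ (α - 1) * (α / (α - 1) * Z ^ (κ - 1)), by positivity,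
    fun ℓ N hℓ hℓN => ?_⟩
  have hℓ0 : (0 : ℝ) < ℓ := by exact_mod_cast hℓ
  have hN0 : (0 : ℝ) < N := by exact_mod_cast hℓ.trans hℓN
  calc _ ≤ (N : ℝ) ^ α * (κ ^ 2 * (((N : ℝ) / κ) ^ (-α) *
          (α / (α - 1) * ((ℓ : ℝ) / κ) ^ (1 - α) * Z ^ (κ - 1)))) := by
        gcongr
        exact sum_prod_one_div_aZR_truncated_le (by omega) hα hℓ hℓN.le
    _ = κ ^ 2 * κ ^ α * κ ^ (α - 1) * (α / (α - 1) * Z ^ (κ - 1)) / (ℓ : ℝ) ^ (α - 1) := by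
        rw [Real.div_rpow hN0.le hκ0.le, Real.div_rpow hℓ0.le hκ0.le,
          show 1 - α = -(α - 1) by ring, Real.rpow_neg hκ0.le, Real.rpow_neg hN0.le,
          Real.rpow_neg hκ0.le, Real.rpow_neg hℓ0.le]
        field_simp
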